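/- Let n ≥ 5 and let H = C(n,n−1;1). Let M be the n × n real matrix whose (i,j)-entry is the number of elements h ∈ H with h(j) = i. Then the characteristic polynomial of M equals (x − (n−1)(n−2)!) · (x − (n−3)!)^{n−2} · (x + (n−2)!). -/

import Mathlib

/-- `cycSet n k r` is the set `C(n,k;r)` of `k`-cycles of the symmetric group on `Fin n`
moving every point in `{0, 1, ..., r-1}` (the first `r` points). -/
def cycSet (n k r : ℕ) : Set (Equiv.Perm (Fin n)) :=
  {σ | σ.IsCycle ∧ σ.support.card = k ∧ ∀ i : Fin n, (i : ℕ) < r → σ i ≠ i}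

open Classical in
/-- The adjacency matrix of the Cayley graph `Cay(S_n, C(n,k;r))`. -/
noncomputable def adjMat (n k r : ℕ) :
    Matrix (Equiv.Perm (Fin n)) (Equiv.Perm (Fin n)) ℝ :=
  fun g h => if g⁻¹ * h ∈ cycSet n k r then 1 else 0

/-- `μ` is an eigenvalue of the adjacency matrix of `Cay(S_n, C(n,k;r))`. -/
def IsAdjEigenvalue (n k r : ℕ) (μ : ℝ) : Prop :=
  ∃ v : Equiv.Perm (Fin n) → ℝ, v ≠ 0 ∧ (adjMat n k r).mulVec v = μ • v

/-- The dimension of the `μ`-eigenspace of the adjacency matrix of `Cay(S_n, C(n,k;r))`,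
acting on `ℝ^{S_n}`. -/
noncomputable def eigMult (n k r : ℕ) (μ : ℝ) : ℕ :=
  Module.finrank ℝ (Module.End.eigenspace (adjMat n k r).mulVecLin μ)
/-- The `n × n` matrix of the action of the formal sum of `H = C(n,n-1;1)` on the natural
permutation module `ℝⁿ`: the `(i,j)`-entry is the number of `h ∈ H` with `h j = i`. -/
noncomputable def permMat (n : ℕ) : Matrix (Fin n) (Fin n) ℝ :=
  fun i j => (Nat.card {h : Equiv.Perm (Fin n) // h ∈ cycSet n (n - 1) 1 ∧ h j = i} : ℝ)

/-!
Every `h ∈ H` is a cycle fixing exactly one point `f ≠ 0`. Cutting `y` out of a cycle `σ` with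
`σ y = x`, i.e. passing to `swap y x * σ`, is a bijection onto the cycles supported on one point
less; hence there are `(k-1)!` cycles with a given support of size `k`, and `(k-2)!` of them
send a given `y` to a given `x ≠ y`. Summing over the fixed point `f` gives `M₀₀ = 0`,
`Mᵢᵢ = (n-2)!` for `i ≠ 0` and `Mᵢⱼ = (n - #{0,i,j})(n-3)!` for `i ≠ j`. So
`M = (n-3)! I + U K Uᵀ` with `U = [𝟙 | e₀]`, and by Sylvester's identity `χ_M` is
`(x - (n-3)!)^(n-2)` times the shifted characteristic polynomial of the triangular `2 × 2`
matrix `K UᵀU`.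
-/

open Equiv Finset
open scoped Nat

theorem card_subtype_eq_sum_card_of_partition {ι κ : Type*} [Finite ι] {P : ι → Prop}
    {t : Finset κ} {Q : κ → ι → Prop} (hP : ∀ a, P a ↔ ∃ b ∈ t, Q b a)
    (hQ : ∀ a b b', Q b a → Q b' a → b = b') :
    Nat.card {a // P a} = ∑ b ∈ t, Nat.card {a // Q b a} := by
  classical
  have := Fintype.ofFinite ι
  simp only [Nat.card_eq_fintype_card, Fintype.card_subtype]
  rw [← card_biUnion]
  · congr 1; ext a; simp [hP]
  · intro b _ b' _ hne
    simp only [Function.onFun, disjoint_left, mem_filter]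
    exact fun a ha ha' => hne (hQ a b b' ha.2 ha'.2)

namespace Equiv.Perm

variable {α : Type*}

theorem SameCycle.of_forall_sameCycle_apply {f g : Perm α} (h : ∀ w, g.SameCycle w (f w))
    {x y : α} (hxy : f.SameCycle x y) : g.SameCycle x y := by
  obtain ⟨k, rfl⟩ := hxy
  induction k using Int.induction_on with
  | zero => rfl
  | succ k ih => rw [add_comm, zpow_add, zpow_one, mul_apply]; exact ih.trans (h _)
  | pred k ih =>
    have := h ((f ^ (-(k : ℤ) - 1)) x)
    rw [← mul_apply, ← zpow_one_add, add_sub_cancel] at this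
    exact ih.trans this.symm

variable [DecidableEq α]

theorem IsCycle.swap_mul_of_apply_eq_self {τ : Perm α} (hτ : τ.IsCycle) {x y : α}
    (hx : τ x ≠ x) (hy : τ y = y) : (swap y x * τ).IsCycle := by
  set σ := swap y x * τ
  have hxy : x ≠ y := by rintro rfl; exact hx hy
  have hσy : σ y = x := by simp [σ, hy]
  have hσ : ∀ w, w ≠ y → τ w ≠ x → σ w = τ w := fun w hwy hwx =>
    swap_apply_of_ne_of_ne (fun h => hwy (τ.injective (h.trans hy.symm))) hwx
  -- σ follows τ, except that the step into `x` makes a detour through `y`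
  have hstep : ∀ w, σ.SameCycle w (τ w) := by
    intro w
    by_cases hwy : w = y
    · rw [hwy, hy]
    by_cases hwx : τ w = x
    · have hσw : σ w = y := by simp [σ, hwx]
      exact ⟨2, by rw [zpow_two, mul_apply, hσw, hσy, hwx]⟩
    · rw [← hσ w hwy hwx]; exact sameCycle_apply_right.mpr .rfl
  refine ⟨x, by rwa [hσ x hxy hx], fun z hz => ?_⟩
  by_cases hzy : z = y
  · have : σ.SameCycle y (σ y) := sameCycle_apply_right.mpr .rfl
    rw [hσy] at this
    exact hzy ▸ this.symm
  · have hτz : τ z ≠ z := by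
      intro h
      have hzx : z ≠ x := by rintro rfl; exact hx h
      exact hz (by simp [σ, h, swap_apply_of_ne_of_ne hzy hzx])
    exact (hτ.sameCycle hx hτz).of_forall_sameCycle_apply hstep

variable [Fintype α]

theorem card_isCycle_support_eq_apply_eq {s : Finset α} {x y : α} (hx : x ∈ s) (hy : y ∈ s)
    (hxy : x ≠ y) (hs : 3 ≤ #s) :
    Nat.card {σ : Perm α // σ.IsCycle ∧ σ.support = s ∧ σ y = x} =
      Nat.card {τ : Perm α // τ.IsCycle ∧ τ.support = s.erase y} := by
  have remove : ∀ σ : Perm α, σ.IsCycle ∧ σ.support = s ∧ σ y = x →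
      (swap y x * σ).IsCycle ∧ (swap y x * σ).support = s.erase y := by
    rintro σ ⟨hσ, rfl, rfl⟩
    have hσσy : σ (σ y) ≠ y := fun h => by
      rw [hσ.eq_swap_of_apply_apply_eq_self hxy h, card_support_swap hxy.symm] at hs
      omega
    exact ⟨hσ.swap_mul hxy hσσy, by rw [support_swap_mul_eq σ y hσσy, sdiff_singleton_eq_erase]⟩
  have reinsert : ∀ τ : Perm α, τ.IsCycle ∧ τ.support = s.erase y →
      (swap y x * τ).IsCycle ∧ (swap y x * τ).support = s ∧ (swap y x * τ) y = x := by
    rintro τ ⟨hτ, hτs⟩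
    have hτx : τ x ≠ x := mem_support.mp (hτs ▸ mem_erase.mpr ⟨hxy, hx⟩)
    have hτy : τ y = y := notMem_support.mp (hτs ▸ notMem_erase y s)
    have hσy : (swap y x * τ) y = x := by simp [hτy]
    have hτxy : τ x ≠ y := fun h => hxy (τ.injective (h.trans hτy.symm))
    have hσσy : (swap y x * τ) ((swap y x * τ) y) ≠ y := by
      rwa [hσy, mul_apply, swap_apply_of_ne_of_ne hτxy hτx]
    refine ⟨hτ.swap_mul_of_apply_eq_self hτx hτy, ?_, hσy⟩
    have := support_swap_mul_eq _ y hσσy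
    rw [hσy, swap_mul_self_mul, hτs, sdiff_singleton_eq_erase] at this
    rw [← insert_erase hy, this, insert_erase (mem_support.mpr (by rwa [hσy]))]
  exact Nat.card_congr
    { toFun σ := ⟨swap y x * σ, remove σ σ.2⟩
      invFun τ := ⟨swap y x * τ, reinsert τ τ.2⟩
      left_inv σ := by simp [swap_mul_self_mul]
      right_inv τ := by simp [swap_mul_self_mul] }

theorem card_isCycle_support_eq_pair {a b : α} (hab : a ≠ b) :
    Nat.card {σ : Perm α // σ.IsCycle ∧ σ.support = {a, b}} = 1 := by
  refine Nat.card_eq_one_iff_exists.mpr ⟨⟨swap a b, isCycle_swap hab, support_swap hab⟩, ?_⟩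
  rintro ⟨σ, hσ, hσs⟩
  have hmoved : ∀ w ∈ ({a, b} : Finset α), σ w ≠ w ∧ σ w ∈ ({a, b} : Finset α) := fun w hw =>
    ⟨mem_support.mp (hσs ▸ hw), hσs ▸ apply_mem_support.mpr (hσs ▸ hw)⟩
  have hσa : σ a = b := by have := hmoved a (by simp); grind
  have hσb : σ b = a := by have := hmoved b (by simp); grind
  have := hσ.eq_swap_of_apply_apply_eq_self (x := a) (by rw [hσa]; exact hab.symm)
    (by rw [hσa, hσb])
  exact Subtype.ext (by rwa [hσa] at this)

theorem card_isCycle_support_eq {s : Finset α} (hs : 2 ≤ #s) :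
    Nat.card {σ : Perm α // σ.IsCycle ∧ σ.support = s} = (#s - 1)! := by
  induction hk : #s generalizing s with
  | zero => omega
  | succ k ih =>
    obtain hk1 | hk2 := (show k = 1 ∨ 2 ≤ k by omega)
    · obtain ⟨a, b, hab, rfl⟩ := card_eq_two.mp (hk1 ▸ hk)
      simp [card_isCycle_support_eq_pair hab, hk1]
    obtain ⟨y, hy⟩ : s.Nonempty := card_pos.mp (by omega)
    have hcard : #(s.erase y) = k := by rw [card_erase_of_mem hy, hk]; rfl
    rw [card_subtype_eq_sum_card_of_partition (t := s.erase y)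
      (Q := fun x σ => σ.IsCycle ∧ σ.support = s ∧ σ y = x)]
    · rw [sum_congr rfl fun x hx => (card_isCycle_support_eq_apply_eq (mem_of_mem_erase hx) hy
        (ne_of_mem_erase hx) (by omega)).trans (ih (by omega) hcard), sum_const, hcard, smul_eq_mul,
        Nat.mul_factorial_pred (by omega), Nat.add_sub_cancel]
    · refine fun σ => ⟨fun ⟨hσ, hσs⟩ => ⟨σ y, ?_, hσ, hσs, rfl⟩,
        fun ⟨_, _, hσ, hσs, _⟩ => ⟨hσ, hσs⟩⟩
      have hyσ : y ∈ σ.support := hσs ▸ hy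
      exact mem_erase.mpr ⟨mem_support.mp hyσ, hσs ▸ apply_mem_support.mpr hyσ⟩
    · rintro σ x x' ⟨-, -, rfl⟩ ⟨-, -, rfl⟩; rfl

theorem card_support_eq_card_sub_one_iff [Nonempty α] {g : Perm α} :
    #g.support = Fintype.card α - 1 ↔ ∃ f, g.support = univ.erase f := by
  refine ⟨fun h => ?_, fun ⟨f, hf⟩ => by rw [hf, card_erase_of_mem (mem_univ f), Finset.card_univ]⟩
  have : #g.supportᶜ = 1 := by rw [card_compl, h]; have := Fintype.card_pos (α := α); omega
  obtain ⟨f, hf⟩ := card_eq_one.mp this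
  exact ⟨f, by rw [← compl_singleton, ← hf, compl_compl]⟩

theorem card_isCycle_support_eq_erase_apply_eq (f i j : α) (hα : 4 ≤ Fintype.card α) :
    Nat.card {g : Perm α // g.IsCycle ∧ g.support = univ.erase f ∧ g j = i} =
      if i = j then (if f = i then (Fintype.card α - 2)! else 0)
      else if f = i ∨ f = j then 0 else (Fintype.card α - 3)! := by
  have hcard : #(univ.erase f) = Fintype.card α - 1 := by
    rw [card_erase_of_mem (mem_univ f), Finset.card_univ]
  split_ifs with hij hfi hfij
  · subst hij hfi
    have hfix : ∀ g : Perm α, (g.IsCycle ∧ g.support = univ.erase f ∧ g f = f) ↔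
        (g.IsCycle ∧ g.support = univ.erase f) := fun g =>
      ⟨fun h => ⟨h.1, h.2.1⟩, fun h => ⟨h.1, h.2, notMem_support.mp (h.2 ▸ notMem_erase f univ)⟩⟩
    rw [Nat.card_congr (Equiv.subtypeEquivRight hfix), card_isCycle_support_eq (by omega), hcard,
      Nat.sub_sub]
  · subst hij
    refine Nat.card_eq_zero.mpr (.inl ⟨fun ⟨g, _, hgs, hgi⟩ => ?_⟩)
    exact mem_support.mp (hgs ▸ mem_erase.mpr ⟨Ne.symm hfi, mem_univ i⟩) hgi
  · refine Nat.card_eq_zero.mpr (.inl ⟨fun ⟨g, _, hgs, hgj⟩ => ?_⟩)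
    have hj : j ∈ g.support := mem_support.mpr (hgj ▸ hij)
    have hi : i ∈ g.support := hgj ▸ apply_mem_support.mpr hj
    rw [hgs] at hi hj
    rcases hfij with rfl | rfl
    exacts [notMem_erase f univ hi, notMem_erase f univ hj]
  · rw [card_isCycle_support_eq_apply_eq (mem_erase.mpr ⟨by tauto, mem_univ i⟩)
      (mem_erase.mpr ⟨by tauto, mem_univ j⟩) hij (by omega),
      card_isCycle_support_eq (by rw [card_erase_of_mem (by simp; tauto), hcard]; omega),
      card_erase_of_mem (by simp; tauto), hcard, Nat.sub_sub, Nat.sub_sub]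

theorem card_isCycle_card_support_eq_card_sub_one_apply_eq (z i j : α)
    (hα : 4 ≤ Fintype.card α) :
    Nat.card {g : Perm α // g.IsCycle ∧ #g.support = Fintype.card α - 1 ∧ g z ≠ z ∧ g j = i} =
      if i = j then (if i = z then 0 else (Fintype.card α - 2)!)
      else (Fintype.card α - #{z, i, j}) * (Fintype.card α - 3)! := by
  have : Nonempty α := ⟨z⟩
  rw [card_subtype_eq_sum_card_of_partition (t := univ.erase z)
    (Q := fun f g => g.IsCycle ∧ g.support = univ.erase f ∧ g j = i)]
  · simp_rw [card_isCycle_support_eq_erase_apply_eq _ i j hα]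
    split_ifs with hij hiz
    · simp [hiz]
    · simp [hiz]
    · rw [sum_ite, sum_const_zero, zero_add, sum_const, smul_eq_mul, ← card_univ_sdiff]
      congr 2
      ext f
      simp only [mem_filter, mem_erase, mem_sdiff, mem_univ, mem_insert, mem_singleton]
      tauto
  · intro g
    rw [card_support_eq_card_sub_one_iff]
    constructor
    · rintro ⟨hg, ⟨f, hf⟩, hz, hj⟩
      refine ⟨f, mem_erase.mpr ⟨fun hfz => ?_, mem_univ f⟩, hg, hf, hj⟩
      exact notMem_erase f univ (hf ▸ hfz ▸ mem_support.mpr hz)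
    · rintro ⟨f, hf, hg, hgf, hj⟩
      exact ⟨hg, ⟨f, hgf⟩, mem_support.mp (hgf ▸ mem_erase.mpr ⟨ne_of_mem_erase hf |>.symm,
        mem_univ z⟩), hj⟩
  · rintro g f f' ⟨-, hf, -⟩ ⟨-, hf', -⟩
    exact (erase_inj univ (mem_univ f)).mp (hf.symm.trans hf')

end Equiv.Perm

namespace Matrix

open Polynomial

variable {R : Type*} [CommRing R]

theorem charpoly_mul_add_scalar {m n : Type*} [Fintype m] [Fintype n] [DecidableEq m]
    [DecidableEq n] (U : Matrix n m R) (V : Matrix m n R) (c : R)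
    (h : Fintype.card m ≤ Fintype.card n) :
    (U * V + scalar n c).charpoly =
      (X - C c) ^ (Fintype.card n - Fintype.card m) * (V * U).charpoly.comp (X - C c) := by
  rw [← sub_neg_eq_add, ← map_neg, charpoly_sub_scalar, charpoly_mul_comm_of_le U V h,
    mul_comp, pow_comp, X_comp, C_neg, ← sub_eq_add_neg]

theorem charpoly_upperTriangular_fin_two [Nontrivial R] (a b d : R) :
    !![a, b; 0, d].charpoly = (X - C a) * (X - C d) := by
  rw [charpoly_fin_two, trace_fin_two_of, det_fin_two_of]
  simp only [mul_zero, sub_zero, map_add, map_mul]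
  ring

variable {ι : Type*} [Fintype ι] [DecidableEq ι]

variable (R) in
def onesAndSingle (z : ι) : Matrix ι (Fin 2) R :=
  of fun i => ![1, if i = z then 1 else 0]

theorem onesAndSingle_transpose_mul_self (z : ι) :
    (onesAndSingle R z)ᵀ * onesAndSingle R z =
      !![(Fintype.card ι : R), 1; 1, 1] := by
  ext s t
  fin_cases s <;> fin_cases t <;> simp [onesAndSingle, mul_apply]

end Matrix

open Equiv.Perm Matrix

theorem mem_cycSet_sub_one_one_iff {n : ℕ} [NeZero n] {h : Perm (Fin n)} :
    h ∈ cycSet n (n - 1) 1 ↔ h.IsCycle ∧ #h.support = Fintype.card (Fin n) - 1 ∧ h 0 ≠ 0 := by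
  simp [cycSet, Fin.val_eq_zero_iff]

theorem permMat_apply {n : ℕ} [NeZero n] (hn : 4 ≤ n) (i j : Fin n) :
    permMat n i j = ((if i = j then (if i = 0 then 0 else (n - 2)!)
      else (n - #{0, i, j}) * (n - 3)! : ℕ) : ℝ) := by
  rw [permMat, Nat.card_congr (Equiv.subtypeEquivRight fun h => by
    rw [mem_cycSet_sub_one_one_iff, and_assoc, and_assoc]),
    card_isCycle_card_support_eq_card_sub_one_apply_eq 0 i j (by simpa), Fintype.card_fin]

theorem cast_factorial_sub_two {n : ℕ} (hn : 3 ≤ n) :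
    ((n - 2)! : ℝ) = ((n : ℝ) - 2) * (n - 3)! := by
  rw [← Nat.mul_factorial_pred (by omega : n - 2 ≠ 0), show n - 2 - 1 = n - 3 by omega]
  push_cast [Nat.cast_sub (by omega : 2 ≤ n)]
  ring

theorem permMat_eq {n : ℕ} [NeZero n] (hn : 5 ≤ n) :
    permMat n =
      onesAndSingle ℝ 0 * !![((n : ℝ) - 3) * (n - 3)!, (n - 3)!; (n - 3)!, -n * (n - 3)!] *
        (onesAndSingle ℝ 0)ᵀ + scalar (Fin n) ((n - 3)! : ℝ) := by
  have hfact := cast_factorial_sub_two (n := n) (by omega)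
  ext i j
  rw [permMat_apply (by omega)]
  simp only [Matrix.add_apply, Matrix.mul_apply, Fin.sum_univ_two, onesAndSingle, of_apply,
    transpose_apply, scalar_apply, diagonal_apply]
  by_cases hij : i = j
  · subst hij
    by_cases hi : i = 0 <;> simp [hi, hfact] <;> ring
  have cast_sub (k : ℕ) (hk : k ≤ n) : ((n - k : ℕ) : ℝ) = n - k := by push_cast [hk]; rfl
  by_cases hi : i = 0
  · subst hi
    rw [insert_eq_of_mem (mem_insert_self 0 _), card_pair hij]
    simp [Ne.symm hij, hij, cast_sub 2 (by omega)]
    ring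
  by_cases hj : j = 0
  · subst hj
    rw [pair_comm, insert_eq_of_mem (mem_insert_self 0 _), card_pair (Ne.symm hi)]
    simp [hi, cast_sub 2 (by omega)]
    ring
  rw [card_insert_of_notMem (by simp [Ne.symm hi, Ne.symm hj]), card_pair hij]
  simp [hi, hj, hij, cast_sub 3 (by omega)]

open Polynomial in
/-- For `n ≥ 5`, the characteristic polynomial of the matrix of `C(n,n-1;1)` on the
permutation module is `(x - (n-1)(n-2)!)(x - (n-3)!)^{n-2}(x + (n-2)!)`. -/
theorem stmt17 (n : ℕ) (hn : 5 ≤ n) :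
    (permMat n).charpoly =
      (X - C (((n - 1) * (n - 2).factorial : ℕ) : ℝ)) *
      (X - C (((n - 3).factorial : ℕ) : ℝ)) ^ (n - 2) *
      (X + C (((n - 2).factorial : ℕ) : ℝ)) := by
  have : NeZero n := ⟨by omega⟩
  set l : ℝ := (((n - 3)! : ℕ) : ℝ)
  have hA : (((n - 1) * (n - 2)! : ℕ) : ℝ) = l + ((n : ℝ) ^ 2 - 3 * n + 1) * l := by
    push_cast [Nat.cast_sub (by omega : 1 ≤ n), cast_factorial_sub_two (by omega : 3 ≤ n)]
    ring
  have hB : (((n - 2)! : ℕ) : ℝ) = -(l + (1 - n) * l) := by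
    rw [cast_factorial_sub_two (by omega)]
    ring
  have hKG : !![((n : ℝ) - 3) * l, l; l, -n * l] * !![(n : ℝ), 1; 1, 1] =
      !![((n : ℝ) ^ 2 - 3 * n + 1) * l, ((n : ℝ) - 2) * l; 0, (1 - n) * l] := by
    rw [mul_fin_two]
    ext i j
    fin_cases i <;> fin_cases j <;> simp <;> ring
  rw [permMat_eq hn, Matrix.mul_assoc, charpoly_mul_add_scalar _ _ _ (by simp; omega),
    Matrix.mul_assoc, onesAndSingle_transpose_mul_self, Fintype.card_fin, Fintype.card_fin, hKG,
    charpoly_upperTriangular_fin_two, mul_comp, sub_comp, sub_comp, X_comp, C_comp, C_comp, hA, hB]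
  simp only [map_add, map_neg]
  ring
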